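/- Let F be a subfield of ℝ and S = {g₁,…,g_s} ⊂ F[x] finite with K_S ⊂ ℝ compact. Then the quadratic module M_S = ∑_{i=0}^s F_{≥0} F[x]² gᵢ (with g₀ = 1) is archimedean: there exists N ∈ ℕ with N − x² ∈ M_S. -/

import Mathlib

/-!
Compactness of `K_S` forces some `gᵢ` to be negative near `+∞` and some `gⱼ` to be negative
near `-∞`. From them one builds `q ∈ M_S` of even degree `> 2` with negative leading
coefficient: `X⁴ gᵢ` if `deg gᵢ` is even; otherwise both degrees are odd with leading
coefficients of opposite signs, and `b (X + c)² X^{2s} gᵢ + a X^{2t+2} gⱼ` (degrees aligned so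
that the top terms cancel) has its next coefficient affine in `c` with nonzero slope.
Then `-q - X²` has even degree and positive leading coefficient, and such a polynomial becomes a
weighted sum of squares after adding a constant: every lower monomial is absorbed by a small
share of the leading term, even ones through `(x^m - y^m)(x^k - y^k) = (x - y)² ⋯` with
`x = X²`, `y = θ²` for a large `θ`, odd ones by completing the square.
Finally `N - X² = (-q - X² + N) + q ∈ M_S`.
-/

open Polynomial

noncomputable def pev (F : Subfield ℝ) (f : F[X]) (x : ℝ) : ℝ := Polynomial.aeval x f

/-- `σ` is a finite sum of terms `t·g²` with `t ∈ F`, `t ≥ 0`, `g ∈ F[x]`. -/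
def SumWtSq (F : Subfield ℝ) (σ : F[X]) : Prop :=
  ∃ (n : ℕ) (t : Fin n → F) (g : Fin n → F[X]),
    (∀ i, (0:ℝ) ≤ (t i : ℝ)) ∧ σ = ∑ i, C (t i) * g i ^ 2

open Filter

theorem pow_add_add_pow_add_sub_pow_mul_pow {R : Type*} [CommRing R] (x y : R) (m k : ℕ) :
    x ^ (m + k) + y ^ (m + k) - y ^ k * x ^ m =
      y ^ m * x ^ k + (∑ i ∈ Finset.range m, x ^ i * y ^ (m - 1 - i)) *
        (∑ i ∈ Finset.range k, x ^ i * y ^ (k - 1 - i)) * (x - y) ^ 2 := by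
  linear_combination (-(∑ i ∈ Finset.range k, x ^ i * y ^ (k - 1 - i)) * (x - y)) *
    geom_sum₂_mul x y m - (x ^ m - y ^ m) * geom_sum₂_mul x y k

theorem coeff_X_add_C_sq_mul {R : Type*} [CommRing R] (p : R[X]) (c : R) (n : ℕ) :
    ((X + C c) ^ 2 * p).coeff (n + 2) =
      p.coeff n + 2 * c * p.coeff (n + 1) + c ^ 2 * p.coeff (n + 2) := by
  have hsq : (X + C c) ^ 2 * p = X ^ 2 * p + C (2 * c) * (X * p) + C (c ^ 2) * p := by
    rw [C_mul, C_pow, C_ofNat]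
    ring
  rw [hsq, coeff_add, coeff_add, coeff_C_mul, coeff_C_mul, coeff_X_pow_mul', if_pos (by omega),
    Nat.add_sub_cancel, show n + 2 = n + 1 + 1 by rfl, coeff_X_mul]

theorem exists_natDegree_eq_leadingCoeff_eq_neg_one {K : Type*} [Field K] [CharZero K]
    {P Q : K[X]} {e : ℕ} (hP : P.natDegree = e + 1) (hQ : Q.natDegree = e + 1) :
    ∃ c : K,
      (C Q.leadingCoeff * (X + C c) ^ 2 * P - C P.leadingCoeff * X ^ 2 * Q).natDegree = e + 2 ∧
      (C Q.leadingCoeff * (X + C c) ^ 2 * P - C P.leadingCoeff * X ^ 2 * Q).leadingCoeff = -1 := by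
  set α := P.leadingCoeff
  set β := Q.leadingCoeff
  have hα : α ≠ 0 := leadingCoeff_ne_zero.mpr (ne_zero_of_natDegree_gt (n := 0) (by omega))
  have hβ : β ≠ 0 := leadingCoeff_ne_zero.mpr (ne_zero_of_natDegree_gt (n := 0) (by omega))
  -- the top coefficients cancel, and the next one is affine in `c` with slope `2αβ ≠ 0`
  set c : K := (α * Q.coeff e - β * P.coeff e - 1) / (2 * α * β)
  refine ⟨c, ?_⟩
  set q := C β * (X + C c) ^ 2 * P - C α * X ^ 2 * Q
  have hcoeff : ∀ n, q.coeff (n + 2) =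
      β * (P.coeff n + 2 * c * P.coeff (n + 1) + c ^ 2 * P.coeff (n + 2)) - α * Q.coeff n := by
    intro n
    rw [coeff_sub, mul_assoc, mul_assoc, coeff_C_mul, coeff_C_mul, coeff_X_add_C_sq_mul,
      coeff_X_pow_mul', if_pos (by omega), Nat.add_sub_cancel]
  have hP0 : ∀ n, e + 1 < n → P.coeff n = 0 := fun _ hn =>
    coeff_eq_zero_of_natDegree_lt (by omega)
  have hQ0 : ∀ n, e + 1 < n → Q.coeff n = 0 := fun _ hn =>
    coeff_eq_zero_of_natDegree_lt (by omega)
  have hPtop : P.coeff (e + 1) = α := by rw [← hP]; rfl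
  have hQtop : Q.coeff (e + 1) = β := by rw [← hQ]; rfl
  have htop : q.coeff (e + 2) = -1 := by
    rw [hcoeff, hP0 (e + 2) (by omega), hPtop]
    simp only [c]
    field_simp
    ring
  have hdeg : q.natDegree ≤ e + 2 := by
    refine natDegree_le_iff_coeff_eq_zero.mpr fun N hN => ?_
    obtain ⟨n, rfl⟩ := Nat.exists_eq_add_of_le' (by omega : 2 ≤ N)
    rcases (by omega : n = e + 1 ∨ e + 1 < n) with rfl | hn
    · rw [hcoeff, hP0 (e + 2) (by omega), hP0 (e + 3) (by omega), hPtop, hQtop]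
      ring
    · rw [hcoeff, hP0 n hn, hP0 (n + 1) (by omega), hP0 (n + 2) (by omega), hQ0 n hn]
      ring
  have hq : q.natDegree = e + 2 := natDegree_eq_of_le_of_coeff_ne_zero hdeg (by simp [htop])
  exact ⟨hq, by rw [leadingCoeff, hq, htop]⟩

section

variable {F : Subfield ℝ}

namespace SumWtSq

theorem zero : SumWtSq F 0 := ⟨0, ![], ![], by simp, by simp⟩

theorem C_mul_sq {t : F} (ht : (0 : ℝ) ≤ t) (h : F[X]) : SumWtSq F (C t * h ^ 2) :=
  ⟨1, ![t], ![h], by simpa using ht, by simp⟩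

theorem sq (h : F[X]) : SumWtSq F (h ^ 2) := by
  simpa using C_mul_sq (t := 1) zero_le_one h

theorem const {t : F} (ht : (0 : ℝ) ≤ t) : SumWtSq F (C t) := by
  simpa using C_mul_sq ht 1

theorem add {p q : F[X]} (hp : SumWtSq F p) (hq : SumWtSq F q) : SumWtSq F (p + q) := by
  obtain ⟨n, t, u, ht, rfl⟩ := hp
  obtain ⟨m, s, v, hs, rfl⟩ := hq
  refine ⟨n + m, Fin.append t s, Fin.append u v, fun i => ?_, ?_⟩
  · induction i using Fin.addCases with
    | left i => simpa only [Fin.append_left] using ht i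
    | right i => simpa only [Fin.append_right] using hs i
  · simp only [Fin.sum_univ_add, Fin.append_left, Fin.append_right]

theorem sum {ι : Type*} (s : Finset ι) {f : ι → F[X]} (hf : ∀ i ∈ s, SumWtSq F (f i)) :
    SumWtSq F (∑ i ∈ s, f i) :=
  Finset.sum_induction _ _ (fun _ _ => add) zero hf

theorem mul {p q : F[X]} (hp : SumWtSq F p) (hq : SumWtSq F q) : SumWtSq F (p * q) := by
  obtain ⟨n, t, u, ht, rfl⟩ := hp
  obtain ⟨m, s, v, hs, rfl⟩ := hq
  rw [Finset.sum_mul_sum]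
  refine sum _ fun i _ => sum _ fun j _ => ?_
  convert C_mul_sq (t := t i * s j) (by push_cast; exact mul_nonneg (ht i) (hs j)) (u i * v j)
    using 1
  rw [C_mul]
  ring

theorem C_mul {t : F} (ht : (0 : ℝ) ≤ t) {p : F[X]} (hp : SumWtSq F p) : SumWtSq F (C t * p) :=
  (const ht).mul hp

theorem geom_sum₂_sq (h u : F[X]) (n : ℕ) :
    SumWtSq F (∑ i ∈ Finset.range n, (h ^ 2) ^ i * (u ^ 2) ^ (n - 1 - i)) := by
  refine sum _ fun i _ => ?_
  convert sq (h ^ i * u ^ (n - 1 - i)) using 1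
  ring

theorem sq_pow_add_sq_pow_sub (h u : F[X]) (m k : ℕ) :
    SumWtSq F ((h ^ 2) ^ (m + k) + (u ^ 2) ^ (m + k) - (u ^ 2) ^ k * (h ^ 2) ^ m) := by
  rw [pow_add_add_pow_add_sub_pow_mul_pow]
  refine add ?_ (((geom_sum₂_sq h u m).mul (geom_sum₂_sq h u k)).mul (sq _))
  convert sq (u ^ m * h ^ k) using 1
  ring

end SumWtSq

def SumWtSqUpToConst (F : Subfield ℝ) (p : F[X]) : Prop := ∃ c : F, SumWtSq F (p + C c)

theorem SumWtSq.upToConst {p : F[X]} (hp : SumWtSq F p) : SumWtSqUpToConst F p :=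
  ⟨0, by simpa using hp⟩

namespace SumWtSqUpToConst

theorem const (t : F) : SumWtSqUpToConst F (C t) := ⟨-t, by simpa using SumWtSq.zero⟩

theorem add {p q : F[X]} (hp : SumWtSqUpToConst F p) (hq : SumWtSqUpToConst F q) :
    SumWtSqUpToConst F (p + q) := by
  obtain ⟨c, hc⟩ := hp
  obtain ⟨d, hd⟩ := hq
  refine ⟨c + d, ?_⟩
  convert hc.add hd using 1
  rw [C_add]
  ring

theorem sum {ι : Type*} (s : Finset ι) {f : ι → F[X]}
    (hf : ∀ i ∈ s, SumWtSqUpToConst F (f i)) : SumWtSqUpToConst F (∑ i ∈ s, f i) :=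
  Finset.sum_induction _ _ (fun _ _ => add) SumWtSq.zero.upToConst hf

theorem exists_nat {p : F[X]} (hp : SumWtSqUpToConst F p) :
    ∃ N : ℕ, SumWtSq F (p + C (N : F)) := by
  obtain ⟨c, hc⟩ := hp
  obtain ⟨N, hN⟩ := exists_nat_ge (c : ℝ)
  refine ⟨N, ?_⟩
  convert hc.add (SumWtSq.const (t := (N : F) - c) (by push_cast; linarith)) using 1
  rw [C_sub]
  ring

end SumWtSqUpToConst

theorem sumWtSqUpToConst_C_mul_X_pow_add_C_mul_X_pow_even {d m : ℕ} (hmd : m < d) {ε : F}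
    (hε : (0 : ℝ) < ε) (b : F) :
    SumWtSqUpToConst F (C ε * X ^ (2 * d) + C b * X ^ (2 * m)) := by
  rw [pow_mul' _ 2 d, pow_mul' _ 2 m]
  by_cases hb : (0 : ℝ) ≤ b
  · exact ((SumWtSq.C_mul_sq hε.le _).add (SumWtSq.C_mul_sq hb _)).upToConst
  obtain ⟨k, rfl⟩ := Nat.exists_eq_add_of_lt hmd
  obtain ⟨n, hn⟩ := exists_nat_ge (-b / ε : ℝ)
  set θ : F := n + 1
  have hθ : (1 : ℝ) ≤ θ := by simp [θ]
  -- `δ (X^{2d} + θ^{2d} - θ^{2(k+1)} X^{2m})` has `X^{2m}`-coefficient `b`,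
  -- and `δ ≤ ε` because `θ > -b/ε`
  set δ : F := -b / θ ^ (2 * (k + 1))
  have hθk : (θ : ℝ) ≤ (θ : ℝ) ^ (2 * (k + 1)) := le_self_pow₀ hθ (by omega)
  have hθ0 : (0 : ℝ) < θ := by linarith
  have hδ : δ * θ ^ (2 * (k + 1)) = -b :=
    div_mul_cancel₀ _ (pow_ne_zero _ (by rintro h; simp [h] at hθ0))
  have hδR : (δ : ℝ) = -b / (θ : ℝ) ^ (2 * (k + 1)) := by simp [δ]
  have hδ0 : (0 : ℝ) ≤ δ := by
    rw [hδR]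
    exact div_nonneg (by linarith) (by positivity)
  have hδε : (0 : ℝ) ≤ (ε - δ : F) := by
    rw [Subfield.coe_sub, hδR, sub_nonneg, div_le_iff₀ (by positivity)]
    rw [div_le_iff₀ hε] at hn
    have hnθ : (n : ℝ) ≤ θ := by simp [θ]
    nlinarith
  refine ⟨δ * θ ^ (2 * (m + k + 1)), ?_⟩
  convert (SumWtSq.C_mul hδ0 (SumWtSq.sq_pow_add_sq_pow_sub X (C θ) m (k + 1))).add
    (SumWtSq.C_mul_sq hδε (X ^ (m + k + 1))) using 1
  simp only [← C_pow, C_mul, C_sub, ← pow_mul]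
  have hCδ : C δ * C (θ ^ (2 * (k + 1))) = -C b := by rw [← C_mul, hδ, C_neg]
  linear_combination (X ^ (2 * m) : F[X]) * hCδ

theorem sumWtSqUpToConst_C_mul_X_pow_add_C_mul_X_pow_odd {d j : ℕ} (hjd : j < d) {ε : F}
    (hε : (0 : ℝ) < ε) (b : F) :
    SumWtSqUpToConst F (C ε * X ^ (2 * d) + C b * X ^ (2 * j + 1)) := by
  obtain ⟨k, rfl⟩ := Nat.exists_eq_add_of_lt hjd
  have hε0 : ε ≠ 0 := by rintro rfl; simp at hε
  -- complete the square: `b X^{2j+1} = w (X^{j+1} + u X^j)^2 - w X^{2j+2} - w u^2 X^{2j}`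
  set w : F := ε / 2
  set u : F := b / ε
  have hw : (0 : ℝ) < w := by
    rw [show (w : ℝ) = ε / 2 by norm_cast]
    positivity
  have hwu : 2 * w * u = b := by simp only [w, u]; field_simp
  have hsq := SumWtSq.C_mul_sq hw.le (X ^ (j + 1) + C u * X ^ j)
  have hbase := SumWtSq.C_mul hw.le (SumWtSq.sq_pow_add_sq_pow_sub X 1 (j + 1) k)
  have heven := sumWtSqUpToConst_C_mul_X_pow_add_C_mul_X_pow_even
    (lt_add_of_pos_right j (by omega : 0 < k + 1)) hw (-(w * u ^ 2))
  convert ((hsq.add hbase).upToConst.add (SumWtSqUpToConst.const (-w))).add heven using 1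
  have hCwu : 2 * C w * C u = C b := by rw [← hwu, C_mul, C_mul, C_ofNat]
  have hCw : C ε = 2 * C w := by rw [← C_ofNat, ← C_mul, mul_div_cancel₀ _ two_ne_zero]
  simp only [C_neg, C_mul, C_pow]
  linear_combination (-X ^ (2 * j + 1) : F[X]) * hCwu + X ^ (2 * (j + k + 1)) * hCw

theorem sumWtSqUpToConst_C_mul_X_pow_add_C_mul_X_pow {d k : ℕ} (hkd : k < 2 * d) {ε : F}
    (hε : (0 : ℝ) < ε) (b : F) : SumWtSqUpToConst F (C ε * X ^ (2 * d) + C b * X ^ k) := by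
  obtain ⟨j, rfl | rfl⟩ := Nat.even_or_odd' k
  · exact sumWtSqUpToConst_C_mul_X_pow_add_C_mul_X_pow_even (by omega) hε b
  · exact sumWtSqUpToConst_C_mul_X_pow_add_C_mul_X_pow_odd (by omega) hε b

theorem sumWtSqUpToConst_of_even_natDegree {p : F[X]} (hp : Even p.natDegree)
    (hlc : (0 : ℝ) < p.leadingCoeff) : SumWtSqUpToConst F p := by
  obtain ⟨d, hd⟩ := hp
  rcases Nat.eq_zero_or_pos d with rfl | hd0
  · rw [eq_C_of_natDegree_eq_zero hd]
    exact SumWtSqUpToConst.const _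
  have hd2 : p.natDegree = 2 * d := by omega
  -- split the leading term into `2d` equal parts, one for each lower monomial
  set ε : F := p.leadingCoeff / (2 * d : ℕ)
  have hε : (0 : ℝ) < ε := by
    rw [show (ε : ℝ) = (p.leadingCoeff : ℝ) / (2 * d : ℕ) by norm_cast]
    exact div_pos hlc (by exact_mod_cast (by omega : 0 < 2 * d))
  have hsplit :
      p = ∑ k ∈ Finset.range (2 * d), (C ε * X ^ (2 * d) + C (p.coeff k) * X ^ k) := by
    have htop :
        ∑ _k ∈ Finset.range (2 * d), C ε * X ^ (2 * d) = C p.leadingCoeff * X ^ (2 * d) := by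
      rw [Finset.sum_const, Finset.card_range, nsmul_eq_mul, ← C_eq_natCast, ← mul_assoc,
        ← C_mul, mul_div_cancel₀ _ (by simp; omega)]
    rw [Finset.sum_add_distrib, htop, add_comm]
    conv_lhs => rw [as_sum_range_C_mul_X_pow p]
    rw [Finset.sum_range_succ, coeff_natDegree, hd2]
  rw [hsplit]
  exact SumWtSqUpToConst.sum _ fun k hk =>
    sumWtSqUpToConst_C_mul_X_pow_add_C_mul_X_pow (Finset.mem_range.mp hk) hε _

def MemQuadModule (F : Subfield ℝ) {s : ℕ} (g : Fin s → F[X]) (p : F[X]) : Prop :=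
  ∃ (σ₀ : F[X]) (σ : Fin s → F[X]),
    SumWtSq F σ₀ ∧ (∀ i, SumWtSq F (σ i)) ∧ p = σ₀ + ∑ i, σ i * g i

variable {s : ℕ} {g : Fin s → F[X]}

namespace MemQuadModule

theorem sumWtSq_mul {σ : F[X]} (hσ : SumWtSq F σ) (i : Fin s) :
    MemQuadModule F g (σ * g i) := by
  classical
  refine ⟨0, Pi.single i σ, SumWtSq.zero, fun j => ?_, ?_⟩
  · rcases eq_or_ne j i with rfl | hj
    · simpa using hσ
    · simpa [hj] using SumWtSq.zero
  · rw [zero_add, Fintype.sum_eq_single i fun j hj => by simp [hj], Pi.single_eq_same]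

theorem add {p q : F[X]} (hp : MemQuadModule F g p) (hq : MemQuadModule F g q) :
    MemQuadModule F g (p + q) := by
  obtain ⟨σ₀, σ, h₀, hσ, rfl⟩ := hp
  obtain ⟨τ₀, τ, k₀, hτ, rfl⟩ := hq
  refine ⟨σ₀ + τ₀, σ + τ, h₀.add k₀, fun i => (hσ i).add (hτ i), ?_⟩
  simp only [Pi.add_apply, add_mul, Finset.sum_add_distrib]
  ring

theorem sumWtSq_add {t p : F[X]} (ht : SumWtSq F t) (hp : MemQuadModule F g p) :
    MemQuadModule F g (t + p) := by
  obtain ⟨σ₀, σ, h₀, hσ, rfl⟩ := hp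
  exact ⟨t + σ₀, σ, ht.add h₀, hσ, by ring⟩

end MemQuadModule

theorem exists_nat_memQuadModule_C_sub_X_sq {q : F[X]} (hq : MemQuadModule F g q)
    (hev : Even q.natDegree) (h2 : 2 < q.natDegree) (hlc : (q.leadingCoeff : ℝ) < 0) :
    ∃ N : ℕ, MemQuadModule F g (C (N : F) - X ^ 2) := by
  have hX : (X ^ 2 : F[X]).natDegree < (-q).natDegree := by rwa [natDegree_X_pow, natDegree_neg]
  have hdeg : (-q - X ^ 2).natDegree = q.natDegree := by
    rw [natDegree_sub_eq_left_of_natDegree_lt hX, natDegree_neg]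
  have hlc' : (-q - X ^ 2).leadingCoeff = -q.leadingCoeff := by
    rw [leadingCoeff_sub_of_degree_lt (degree_lt_degree hX), leadingCoeff_neg]
  obtain ⟨N, hN⟩ := (sumWtSqUpToConst_of_even_natDegree (hdeg ▸ hev)
    (by rw [hlc', Subfield.coe_neg]; linarith)).exists_nat
  refine ⟨N, ?_⟩
  convert MemQuadModule.sumWtSq_add hN hq using 1
  ring

theorem exists_nat_memQuadModule_C_sub_X_sq_of_even {i : Fin s} (hev : Even (g i).natDegree)
    (hlc : ((g i).leadingCoeff : ℝ) < 0) :
    ∃ N : ℕ, MemQuadModule F g (C (N : F) - X ^ 2) := by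
  have hg : g i ≠ 0 := by rintro h; simp [h] at hlc
  have hq := MemQuadModule.sumWtSq_mul (g := g) (SumWtSq.sq (X ^ 2)) i
  rw [← pow_mul, mul_comm] at hq
  refine exists_nat_memQuadModule_C_sub_X_sq hq ?_ ?_ (by rwa [leadingCoeff_mul_X_pow])
  · rw [natDegree_mul_X_pow _ hg]
    exact hev.add (even_two_mul 2)
  · rw [natDegree_mul_X_pow _ hg]
    omega

theorem exists_nat_memQuadModule_C_sub_X_sq_of_odd {i j : Fin s} (hi : Odd (g i).natDegree)
    (hj : Odd (g j).natDegree) (hlci : ((g i).leadingCoeff : ℝ) < 0)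
    (hlcj : (0 : ℝ) < (g j).leadingCoeff) :
    ∃ N : ℕ, MemQuadModule F g (C (N : F) - X ^ 2) := by
  obtain ⟨m, hm⟩ := hi
  obtain ⟨n, hn⟩ := hj
  have hgi : g i ≠ 0 := by rintro h; simp [h] at hlci
  have hgj : g j ≠ 0 := by rintro h; simp [h] at hlcj
  obtain ⟨c, hdeg, hlc⟩ := exists_natDegree_eq_leadingCoeff_eq_neg_one (e := 2 * (m + n + 1))
    (P := g i * X ^ (2 * (n + 1))) (Q := g j * X ^ (2 * (m + 1)))
    (by rw [natDegree_mul_X_pow _ hgi]; omega) (by rw [natDegree_mul_X_pow _ hgj]; omega)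
  simp only [leadingCoeff_mul_X_pow] at hdeg hlc
  have hq := (MemQuadModule.sumWtSq_mul (g := g)
    (SumWtSq.C_mul_sq hlcj.le (X ^ (n + 1) * (X + C c))) i).add
    (MemQuadModule.sumWtSq_mul (SumWtSq.C_mul_sq (t := -(g i).leadingCoeff)
      (by rw [Subfield.coe_neg]; linarith) (X ^ (m + 2))) j)
  have heq : C (g j).leadingCoeff * (X ^ (n + 1) * (X + C c)) ^ 2 * g i +
        C (-(g i).leadingCoeff) * (X ^ (m + 2)) ^ 2 * g j =
      C (g j).leadingCoeff * (X + C c) ^ 2 * (g i * X ^ (2 * (n + 1))) -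
        C (g i).leadingCoeff * X ^ 2 * (g j * X ^ (2 * (m + 1))) := by
    rw [C_neg]
    ring
  rw [heq] at hq
  refine exists_nat_memQuadModule_C_sub_X_sq hq ?_ (by omega) (by rw [hlc]; norm_num)
  rw [hdeg]
  exact ⟨m + n + 2, by ring⟩

theorem pev_eq_eval_map (p : F[X]) (x : ℝ) : pev F p x = (p.map (algebraMap F ℝ)).eval x := by
  rw [pev, aeval_def, eval₂_eq_eval_map]

theorem eventually_nonneg_pev {p : F[X]} (hp : (0 : ℝ) ≤ p.leadingCoeff) :
    ∀ᶠ x in atTop, 0 ≤ pev F p x := by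
  simp only [pev_eq_eval_map]
  set P := p.map (algebraMap F ℝ)
  have hP : P.leadingCoeff = p.leadingCoeff := leadingCoeff_map _
  rcases le_or_gt P.degree 0 with hd | hd
  · have h0 : P.natDegree = 0 := natDegree_eq_zero_iff_degree_le_zero.mpr hd
    rw [eq_C_of_natDegree_eq_zero h0]
    filter_upwards with x
    rwa [eval_C, ← h0, coeff_natDegree, hP]
  · exact (tendsto_atTop_of_leadingCoeff_nonneg P hd (hP ▸ hp)).eventually_ge_atTop 0

theorem exists_leadingCoeff_neg (hK : BddAbove {x | ∀ i, 0 ≤ pev F (g i) x}) :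
    ∃ i, ((g i).leadingCoeff : ℝ) < 0 := by
  by_contra! h
  obtain ⟨R, hR⟩ := hK
  obtain ⟨x, hx, hRx⟩ :=
    ((eventually_all.2 fun i => eventually_nonneg_pev (h i)).and (eventually_gt_atTop R)).exists
  exact hRx.not_ge (hR hx)

theorem exists_leadingCoeff_mul_neg_one_pow_neg
    (hK : BddBelow {x | ∀ i, 0 ≤ pev F (g i) x}) :
    ∃ i, ((g i).leadingCoeff : ℝ) * (-1) ^ (g i).natDegree < 0 := by
  have hpev : ∀ p x, pev F (p.comp (-X)) x = pev F p (-x) := by simp [pev, aeval_comp]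
  obtain ⟨b, hb⟩ := hK
  have hbdd : BddAbove {x | ∀ i, 0 ≤ pev F ((g i).comp (-X)) x} := ⟨-b, fun x hx => by
    have := hb (show -x ∈ {x | ∀ i, 0 ≤ pev F (g i) x} from fun i => hpev (g i) x ▸ hx i)
    linarith⟩
  obtain ⟨i, hi⟩ := exists_leadingCoeff_neg hbdd
  refine ⟨i, ?_⟩
  rw [leadingCoeff_comp (by simp), leadingCoeff_neg, leadingCoeff_X] at hi
  exact_mod_cast hi

end

theorem stmt13 (F : Subfield ℝ) (s : ℕ) (g : Fin s → F[X])
    (hKS : IsCompact {x : ℝ | ∀ i, 0 ≤ pev F (g i) x}) :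
    ∃ N : ℕ, ∃ (σ₀ : F[X]) (σ : Fin s → F[X]),
      SumWtSq F σ₀ ∧ (∀ i, SumWtSq F (σ i)) ∧
      C ((N : F)) - X ^ 2 = σ₀ + ∑ i, σ i * g i := by
  obtain ⟨i, hi⟩ := exists_leadingCoeff_neg hKS.bddAbove
  rcases Nat.even_or_odd (g i).natDegree with hie | hio
  · exact exists_nat_memQuadModule_C_sub_X_sq_of_even hie hi
  obtain ⟨j, hj⟩ := exists_leadingCoeff_mul_neg_one_pow_neg hKS.bddBelow
  rcases Nat.even_or_odd (g j).natDegree with hje | hjo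
  · rw [hje.neg_one_pow, mul_one] at hj
    exact exists_nat_memQuadModule_C_sub_X_sq_of_even hje hj
  · rw [hjo.neg_one_pow, mul_neg_one, neg_lt_zero] at hj
    exact exists_nat_memQuadModule_C_sub_X_sq_of_odd hio hjo hi hj
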